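/- Let p be an odd prime and λ a self-Mullineux partition whose Mullineux symbol consists of a single column (a_0, r_0) (equivalently, the p-rim of λ is all of [λ]). Then p does not divide a_0, a_0 = 2 r_0 − 1, and λ is the hook (r_0, 1^{r_0 − 1}). -/

import Mathlib

namespace Mull

/-- A partition of a natural number, encoded as the (0-indexed) weakly decreasing,
eventually-zero sequence of its row lengths.  The Young diagram of `f` is the set
of (0-indexed) nodes `(i, j)` with `j < f i`. -/
def IsPartition (f : ℕ → ℕ) : Prop :=
  Antitone f ∧ ∃ N, f N = 0

/-- The number of nonzero rows of `f`. -/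
noncomputable def len (f : ℕ → ℕ) : ℕ :=
  sInf {N | f N = 0}

/-- The size (number of nodes) of `f`. -/
noncomputable def size (f : ℕ → ℕ) : ℕ :=
  ∑ i ∈ Finset.range (len f), f i

/-- The conjugate (transpose) partition: `conj f j` is the number of rows `i`
with `f i > j`, i.e. the length of the `j`-th column. -/
noncomputable def conj (f : ℕ → ℕ) : ℕ → ℕ :=
  fun j => Nat.card {i | j < f i}

/-- A partition is self-conjugate if it equals its conjugate. -/
def SelfConj (f : ℕ → ℕ) : Prop :=
  conj f = f

/-- The hook length of `f` at the (0-indexed) node `(i, j)`: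
in 1-indexed terms this is `λ_i + λ'_j - i - j + 1`. -/
noncomputable def hook (f : ℕ → ℕ) (i j : ℕ) : ℕ :=
  f i + conj f j - i - j - 1

/-- A BG-partition: a self-conjugate partition none of whose diagonal hook lengths
is divisible by `p`. -/
def IsBG (p : ℕ) (f : ℕ → ℕ) : Prop :=
  IsPartition f ∧ SelfConj f ∧ ∀ i, i < f i → ¬ p ∣ hook f i i

/-- A partition is `p`-regular if it does not have `p` equal nonzero parts. -/
def IsRegular (p : ℕ) (f : ℕ → ℕ) : Prop :=
  ∀ i, f (i + (p - 1)) ≠ 0 → f i ≠ f (i + (p - 1))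

/-- The list of nodes of the rim of `f` (nodes `(i, j)` of the diagram such that
`(i+1, j+1)` is not in the diagram), listed from the top right to the bottom left. -/
noncomputable def rimList (f : ℕ → ℕ) : List (ℕ × ℕ) :=
  (List.range (len f)).flatMap fun i =>
    (List.range (f i - (f (i + 1) - 1))).map fun k => (i, f i - 1 - k)

/-- Auxiliary selection of the `p`-rim from the ordered list of rim nodes (with fuel):
take the next `p`-segment (the next `p` rim nodes), then, if the last selected node is
not in the bottom row, skip the remaining rim nodes lying in the row of the last
selected node and continue from the next row. -/
def pRimAux (p : ℕ) : ℕ → List (ℕ × ℕ) → List (ℕ × ℕ)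
  | 0, _ => []
  | _ + 1, [] => []
  | fuel + 1, c :: L =>
    (c :: L).take p ++
      pRimAux p fuel (((c :: L).drop p).filter
        fun d => (((c :: L).take p).getLastD c).1 < d.1)

/-- The list of nodes of the `p`-rim of `f`, from the top right to the bottom left. -/
noncomputable def pRimList (p : ℕ) (f : ℕ → ℕ) : List (ℕ × ℕ) :=
  pRimAux p (rimList f).length (rimList f)

/-- `f` minus its `p`-rim. -/
noncomputable def removeRim (p : ℕ) (f : ℕ → ℕ) : ℕ → ℕ :=
  fun i => f i - ((pRimList p f).filter fun c => c.1 = i).length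

/-- The number of columns of the Mullineux symbol of `f` (i.e. `l + 1`), namely the
number of times the `p`-rim must be removed to reach the empty partition. -/
noncomputable def steps (p : ℕ) (f : ℕ → ℕ) : ℕ :=
  sInf {k | len ((removeRim p)^[k] f) = 0}

/-- `a_i`: the number of nodes of the `p`-rim of `λ^(i)`. -/
noncomputable def aSeq (p : ℕ) (f : ℕ → ℕ) (i : ℕ) : ℕ :=
  (pRimList p ((removeRim p)^[i] f)).length

/-- `r_i`: the number of nonzero rows of `λ^(i)`. -/
noncomputable def rSeq (p : ℕ) (f : ℕ → ℕ) (i : ℕ) : ℕ :=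
  len ((removeRim p)^[i] f)

/-- `ε_i`: `0` if `p ∣ a_i` and `1` otherwise. -/
noncomputable def epsSeq (p : ℕ) (f : ℕ → ℕ) (i : ℕ) : ℕ :=
  if p ∣ aSeq p f i then 0 else 1

/-- The Mullineux symbol of `f`, recorded as the list of its columns
`(a_i, r_i)` for `0 ≤ i ≤ l`. -/
noncomputable def GSymb (p : ℕ) (f : ℕ → ℕ) : List (ℕ × ℕ) :=
  (List.range (steps p f)).map fun i => (aSeq p f i, rSeq p f i)

/-- The effect of the Mullineux map on one column of the Mullineux symbol:
`(a_i, r_i) ↦ (a_i, s_i)` where `s_i = a_i + ε_i - r_i`. -/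
def mullCol (p : ℕ) (c : ℕ × ℕ) : ℕ × ℕ :=
  (c.1, c.1 + (if p ∣ c.1 then 0 else 1) - c.2)

/-- `f` is a self-Mullineux partition: a `p`-regular partition fixed by the Mullineux
map, i.e. every column of its Mullineux symbol is fixed by `mullCol`. -/
def SelfMull (p : ℕ) (f : ℕ → ℕ) : Prop :=
  IsPartition f ∧ IsRegular p f ∧ (GSymb p f).map (mullCol p) = GSymb p f

/-- `U_λ`: the nodes of the `p`-rim lying on or above the diagonal. -/
noncomputable def UList (p : ℕ) (f : ℕ → ℕ) : List (ℕ × ℕ) :=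
  (pRimList p f).filter fun c => c.1 ≤ c.2

/-- The `p`-rim* of a self-conjugate partition: `U_λ ∪ L_λ`, where `L_λ` is the
reflection of `U_λ` across the diagonal. -/
noncomputable def rimStar (p : ℕ) (f : ℕ → ℕ) : Finset (ℕ × ℕ) :=
  (UList p f).toFinset ∪ (UList p f).toFinset.image fun c => (c.2, c.1)

/-- `a*`: the number of nodes of the `p`-rim*. -/
noncomputable def aStar (p : ℕ) (f : ℕ → ℕ) : ℕ :=
  (rimStar p f).card

/-- `r*`: the number of nodes of `U_λ`. -/
noncomputable def rStar (p : ℕ) (f : ℕ → ℕ) : ℕ :=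
  (UList p f).toFinset.card

/-- `ε* = a* mod 2`. -/
noncomputable def epsStar (p : ℕ) (f : ℕ → ℕ) : ℕ :=
  aStar p f % 2

/-- `λ^(1)*`: `f` minus its `p`-rim*. -/
noncomputable def removeRimStar (p : ℕ) (f : ℕ → ℕ) : ℕ → ℕ :=
  fun i => f i - ((rimStar p f).filter fun c => c.1 = i).card

/-- The number of columns of the BG-symbol of `f`. -/
noncomputable def stepsStar (p : ℕ) (f : ℕ → ℕ) : ℕ :=
  sInf {k | len ((removeRimStar p)^[k] f) = 0}

/-- The BG-symbol of a self-conjugate partition, recorded as the list of its columns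
`(a*_i, r*_i)` for `0 ≤ i ≤ l`. -/
noncomputable def BGSymb (p : ℕ) (f : ℕ → ℕ) : List (ℕ × ℕ) :=
  (List.range (stepsStar p f)).map fun i =>
    (aStar p ((removeRimStar p)^[i] f), rStar p ((removeRimStar p)^[i] f))

/-- The number of diagonal nodes of `f`, i.e. `max {i : λ_i ≥ i}` in 1-indexed terms. -/
noncomputable def kDiag (f : ℕ → ℕ) : ℕ :=
  Nat.card {i | i < f i}

/-- The sequence of diagonal hook lengths of `f` (padded with zeros). -/
noncomputable def diagHooks (f : ℕ → ℕ) : ℕ → ℕ :=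
  fun i => if i < f i then hook f i i else 0

open List

private def Lrow (m : ℕ) : List (ℕ × ℕ) := (List.range m).map fun k => (0, m - 1 - k)
private def Lcol (s t : ℕ) : List (ℕ × ℕ) := (List.range t).map fun i => (s + i, 0)

lemma length_Lrow (m : ℕ) : (Lrow m).length = m := by simp [Lrow]
lemma length_Lcol (s t : ℕ) : (Lcol s t).length = t := by simp [Lcol]

lemma mem_Lrow {a : ℕ × ℕ} {m : ℕ} (h : a ∈ Lrow m) : a.1 = 0 := by
  simp only [Lrow, List.mem_map, List.mem_range] at h
  obtain ⟨i, -, rfl⟩ := h; rfl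

lemma mem_Lcol {a : ℕ × ℕ} {s t : ℕ} (h : a ∈ Lcol s t) : s ≤ a.1 := by
  simp only [Lcol, List.mem_map, List.mem_range] at h
  obtain ⟨i, -, rfl⟩ := h; simp

lemma Lcol_append (s u v : ℕ) : Lcol s (u + v) = Lcol s u ++ Lcol (s + u) v := by
  simp only [Lcol, List.range_add, List.map_append, List.map_map]
  congr 1
  simp [Function.comp_def, Nat.add_assoc]

lemma Lcol_concat (s t : ℕ) : Lcol s (t + 1) = Lcol s t ++ [(s + t, 0)] := by
  rw [Lcol_append]; congr 1

lemma Lcol_cons (s t : ℕ) : Lcol s (t + 1) = (s, 0) :: Lcol (s + 1) t := by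
  simp only [Lcol, List.range_succ_eq_map, List.map_cons, List.map_map]
  refine congrArg₂ List.cons (by simp) ?_
  have hfn : ((fun i => (s + i, 0)) ∘ Nat.succ) = (fun i => (s + 1 + i, (0 : ℕ))) := by
    funext i; simp [Function.comp]; omega
  rw [hfn]

lemma getLastD_Lcol (s t : ℕ) (d : ℕ × ℕ) : (Lcol s (t + 1)).getLastD d = (s + t, 0) := by
  rw [Lcol_concat]; exact List.getLastD_concat

lemma getLastD_Lrow (m : ℕ) (d : ℕ × ℕ) : ((Lrow (m + 1)).getLastD d).1 = 0 := by
  simp only [Lrow, List.range_succ, List.map_append, List.map_cons, List.map_nil]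
  rw [List.getLastD_concat]

lemma getLastD_mem {α : Type*} {l : List α} (h : l ≠ []) (d : α) : l.getLastD d ∈ l := by
  cases l with
  | nil => exact absurd rfl h
  | cons a t =>
    rw [List.getLastD_cons]
    exact List.getLastD_mem_cons

lemma pRimAux_nil (p fuel : ℕ) : pRimAux p fuel [] = [] := by cases fuel <;> rfl

lemma pRimAux_cons (p fuel : ℕ) (c : ℕ × ℕ) (L : List (ℕ × ℕ)) :
    pRimAux p (fuel + 1) (c :: L) = (c :: L).take p ++
      pRimAux p fuel (((c :: L).drop p).filter
        fun d => (((c :: L).take p).getLastD c).1 < d.1) := rfl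

lemma pRimAux_sublist (p : ℕ) : ∀ fuel l, pRimAux p fuel l <+ l := by
  intro fuel
  induction fuel with
  | zero => intro l; rw [show pRimAux p 0 l = [] from rfl]; exact List.nil_sublist l
  | succ n ih =>
    intro l
    cases l with
    | nil => rw [pRimAux_nil]
    | cons c L =>
      rw [pRimAux_cons]
      have h2 : pRimAux p n (((c :: L).drop p).filter
          fun d => (((c :: L).take p).getLastD c).1 < d.1) <+ (c :: L).drop p :=
        (ih _).trans List.filter_sublist
      have := List.Sublist.append (List.Sublist.refl ((c :: L).take p)) h2
      rwa [List.take_append_drop] at this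

lemma col_aux (p : ℕ) (hp : 1 ≤ p) :
    ∀ fuel s t, t ≤ fuel → pRimAux p fuel (Lcol s t) = Lcol s t := by
  intro fuel
  induction fuel with
  | zero =>
    intro s t ht
    obtain rfl : t = 0 := by omega
    simp [Lcol, pRimAux_nil]
  | succ n ih =>
    intro s t ht
    match t with
    | 0 => simp [Lcol, pRimAux_nil]
    | t + 1 =>
      rw [Lcol_cons, pRimAux_cons, ← Lcol_cons]
      by_cases hle : t + 1 ≤ p
      · rw [List.take_of_length_le (by rw [length_Lcol]; omega),
            List.drop_eq_nil_of_le (by rw [length_Lcol]; omega)]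
        simp [pRimAux_nil]
      · push_neg at hle
        have hsplit : Lcol s (t + 1) = Lcol s p ++ Lcol (s + p) (t + 1 - p) := by
          rw [← Lcol_append]; congr 1; omega
        rw [hsplit]
        have hlen : (Lcol s p).length = p := length_Lcol _ _
        rw [List.take_left' hlen, List.drop_left' hlen]
        obtain ⟨p', rfl⟩ : ∃ p', p = p' + 1 := ⟨p - 1, by omega⟩
        rw [getLastD_Lcol]
        have hfilt : List.filter (fun d => decide ((s + p', (0 : ℕ)).1 < d.1))
            (Lcol (s + (p' + 1)) (t + 1 - (p' + 1))) = Lcol (s + (p' + 1)) (t + 1 - (p' + 1)) :=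
          List.filter_eq_self.mpr fun a ha => by
            have := mem_Lcol ha; simp only [decide_eq_true_eq]; omega
        rw [hfilt, ih _ _ (by omega)]

lemma hook_aux (p m : ℕ) (hm : 1 ≤ m) (hmp : m ≤ p) :
    ∀ fuel t, m + t ≤ fuel → pRimAux p fuel (Lrow m ++ Lcol 1 t) = Lrow m ++ Lcol 1 t := by
  intro fuel
  induction fuel with
  | zero => intro t ht; omega
  | succ n ih =>
    intro t ht
    obtain ⟨c, L, hcL⟩ : ∃ c L, Lrow m ++ Lcol 1 t = c :: L := by
      refine List.exists_cons_of_ne_nil ?_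
      intro h
      have := congrArg List.length h
      simp [length_Lrow, length_Lcol] at this
      omega
    rw [hcL, pRimAux_cons, ← hcL]
    by_cases hle : m + t ≤ p
    · rw [List.take_of_length_le (by simp [length_Lrow, length_Lcol]; omega),
          List.drop_eq_nil_of_le (by simp [length_Lrow, length_Lcol]; omega)]
      simp [pRimAux_nil]
    · push_neg at hle
      rcases Nat.lt_or_ge m p with hmlt | hmge
      · -- m < p : first segment is Lrow m ++ Lcol 1 (p - m)
        have hq : 1 ≤ p - m := by omega
        have hsplit : Lcol 1 t = Lcol 1 (p - m) ++ Lcol (1 + (p - m)) (t - (p - m)) := by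
          rw [← Lcol_append]; congr 1; omega
        rw [hsplit, ← List.append_assoc]
        have hlen : (Lrow m ++ Lcol 1 (p - m)).length = p := by
          simp [length_Lrow, length_Lcol]; omega
        rw [List.take_left' hlen, List.drop_left' hlen]
        obtain ⟨q', hq'⟩ : ∃ q', p - m = q' + 1 := ⟨p - m - 1, by omega⟩
        have hlast : ((Lrow m ++ Lcol 1 (p - m)).getLastD c).1 = p - m := by
          rw [hq', Lcol_concat, ← List.append_assoc, List.getLastD_concat]
          simp; omega
        rw [hlast]
        have hfilt : List.filter (fun d => decide (p - m < d.1))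
            (Lcol (1 + (p - m)) (t - (p - m))) = Lcol (1 + (p - m)) (t - (p - m)) :=
          List.filter_eq_self.mpr fun a ha => by
            have := mem_Lcol ha; simp only [decide_eq_true_eq]; omega
        rw [hfilt, col_aux p (by omega) _ _ _ (by omega), List.append_assoc]
      · -- m = p : first segment is Lrow m
        have hmp' : m = p := by omega
        have hlen : (Lrow m).length = p := by rw [length_Lrow, hmp']
        rw [List.take_left' hlen, List.drop_left' hlen]
        obtain ⟨m', rfl⟩ : ∃ m', m = m' + 1 := ⟨m - 1, by omega⟩
        rw [getLastD_Lrow]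
        have hfilt : List.filter (fun d => decide (0 < d.1)) (Lcol 1 t) = Lcol 1 t :=
          List.filter_eq_self.mpr fun a ha => by
            have := mem_Lcol ha; simp only [decide_eq_true_eq]; omega
        rw [hfilt, col_aux p (by omega) _ _ _ (by omega)]


lemma count0_rim_le (f : ℕ → ℕ) (r : ℕ) (hr : len f = r + 1) :
    ((rimList f).filter fun c => c.1 = 0).length ≤ f 0 - (f 1 - 1) := by
  rw [rimList, hr, List.range_succ_eq_map, List.flatMap_cons, List.filter_append,
    List.length_append]
  have h1 : ((List.filter (fun c => decide (c.1 = 0))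
      ((List.range (f 0 - (f (0 + 1) - 1))).map fun k => ((0 : ℕ), f 0 - 1 - k))).length)
      ≤ f 0 - (f 1 - 1) :=
    le_trans (List.length_filter_le _ _) (le_of_eq (by simp))
  have h2 : ((List.filter (fun c => decide (c.1 = 0))
      (((List.range r).map Nat.succ).flatMap fun i =>
        (List.range (f i - (f (i + 1) - 1))).map fun k => (i, f i - 1 - k))).length) = 0 := by
    rw [List.length_eq_zero_iff, List.filter_eq_nil_iff]
    intro a ha
    obtain ⟨i, hi, hai⟩ := List.mem_flatMap.mp ha
    obtain ⟨j, hj, rfl⟩ := List.mem_map.mp hi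
    obtain ⟨k, hk, rfl⟩ := List.mem_map.mp hai
    simp
  omega

lemma flat_col (f : ℕ → ℕ) (t : ℕ)
    (hones : ∀ i, 1 ≤ i → i ≤ t → f i = 1) (hle1 : ∀ i, 1 ≤ i → f i ≤ 1) :
    ((List.range t).flatMap fun a =>
      (List.range (f (a + 1) - (f (a + 1 + 1) - 1))).map fun k => (a + 1, f (a + 1) - 1 - k))
      = Lcol 1 t := by
  induction t with
  | zero => simp [Lcol]
  | succ u ih =>
    rw [List.range_succ, List.flatMap_append,
      ih (fun i h1i h2i => hones i h1i (by omega)), Lcol_concat]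
    congr 1
    have e1 : f (u + 1) = 1 := hones _ (by omega) (by omega)
    have e2 : f (u + 1 + 1) - 1 = 0 := by have := hle1 (u + 1 + 1) (by omega); omega
    simp only [List.flatMap_cons, List.flatMap_nil, List.append_nil, e1, e2]
    simp [List.range_succ, Nat.add_comm]

lemma rimList_hook (f : ℕ → ℕ) (t : ℕ) (hr : len f = t + 1)
    (hle1 : ∀ i, 1 ≤ i → f i ≤ 1) (hones : ∀ i, 1 ≤ i → i ≤ t → f i = 1) :
    rimList f = Lrow (f 0) ++ Lcol 1 t := by
  rw [rimList, hr, List.range_succ_eq_map, List.flatMap_cons, List.flatMap_map]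
  simp only [Nat.succ_eq_add_one]
  rw [flat_col f t hones hle1]
  congr 1
  have h10 : f (0 + 1) - 1 = 0 := by
    norm_num
    have := hle1 1 le_rfl; omega
  rw [h10, Nat.sub_zero]
  rfl


lemma count0_pRimAux_le (p m t fuel : ℕ) (hp : 1 ≤ p) (hm : p < m) :
    ((pRimAux p fuel (Lrow m ++ Lcol 1 t)).filter fun c => c.1 = 0).length ≤ p := by
  cases fuel with
  | zero => simp [pRimAux_nil, show pRimAux p 0 (Lrow m ++ Lcol 1 t) = [] from rfl]
  | succ n =>
    obtain ⟨c, L, hcL⟩ : ∃ c L, Lrow m ++ Lcol 1 t = c :: L := by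
      refine List.exists_cons_of_ne_nil ?_
      intro h
      have := congrArg List.length h
      simp [length_Lrow, length_Lcol] at this
      omega
    rw [hcL, pRimAux_cons, ← hcL, List.filter_append, List.length_append]
    have h1 : ((((Lrow m ++ Lcol 1 t).take p).filter fun c => decide (c.1 = 0)).length) ≤ p :=
      le_trans (List.length_filter_le _ _) (by rw [List.length_take]; omega)
    have htake : (Lrow m ++ Lcol 1 t).take p = (Lrow m).take p := by
      rw [List.take_append, length_Lrow, show p - m = 0 by omega]
      simp
    have hlast : (((Lrow m ++ Lcol 1 t).take p).getLastD c).1 = 0 := by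
      rw [htake]
      apply mem_Lrow
      have hne : (Lrow m).take p ≠ [] := by
        intro h
        have := congrArg List.length h
        rw [List.length_take, length_Lrow] at this
        simp at this
        omega
      exact (List.take_sublist _ _).mem (getLastD_mem hne c)
    have h2 : (((pRimAux p n (((Lrow m ++ Lcol 1 t).drop p).filter
        fun d => (((Lrow m ++ Lcol 1 t).take p).getLastD c).1 < d.1)).filter
        fun c => decide (c.1 = 0)).length) = 0 := by
      rw [List.length_eq_zero_iff, List.filter_eq_nil_iff]
      intro a ha
      have haX := (pRimAux_sublist p n _).subset ha
      have hpa := List.of_mem_filter haX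
      rw [hlast] at hpa
      simp only [decide_eq_true_eq] at hpa ⊢
      omega
    omega

/-- If `λ` is a self-Mullineux partition whose Mullineux symbol has a single column
`(a_0, r_0)` (equivalently, the `p`-rim of `λ` is all of `[λ]`), then `p ∤ a_0`,
`a_0 = 2 r_0 - 1`, and `λ` is the hook `(r_0, 1^{r_0 - 1})`. -/
theorem selfMullineux_single_column (p : ℕ) (hp : p.Prime) (hodd : Odd p)
    (f : ℕ → ℕ) (hf : SelfMull p f) (h1 : steps p f = 1) :
    ¬ p ∣ aSeq p f 0 ∧ aSeq p f 0 = 2 * rSeq p f 0 - 1 ∧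
    f = fun i => if i = 0 then rSeq p f 0 else if i < rSeq p f 0 then 1 else 0 := by
  obtain ⟨⟨hant, N, hN⟩, hreg, hsym⟩ := hf
  have hp1 : 1 ≤ p := hp.one_le
  -- facts from steps p f = 1
  have hSne : {k | len ((removeRim p)^[k] f) = 0}.Nonempty := by
    by_contra h
    rw [Set.not_nonempty_iff_eq_empty] at h
    simp only [steps, h, Nat.sInf_empty] at h1
    omega
  have h1mem : len ((removeRim p)^[steps p f] f) = 0 := Nat.sInf_mem hSne
  rw [h1] at h1mem
  simp only [Function.iterate_one] at h1mem
  have h0not : len f ≠ 0 := by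
    intro h
    have h0 : (0 : ℕ) ∈ {k | len ((removeRim p)^[k] f) = 0} := by simpa using h
    have := Nat.sInf_le h0
    simp only [steps] at h1
    omega
  -- length facts
  have hfr : f (len f) = 0 := Nat.sInf_mem (s := {M | f M = 0}) ⟨N, hN⟩
  have hlt : ∀ i, i < len f → f i ≠ 0 :=
    fun i hi => Nat.notMem_of_lt_sInf (s := {M | f M = 0}) hi
  obtain ⟨t, hr⟩ : ∃ t, len f = t + 1 := ⟨len f - 1, by omega⟩
  have hf0 : 1 ≤ f 0 := Nat.pos_of_ne_zero (hlt 0 (by omega))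
  -- removing the p-rim empties the first row
  have hrem0 : removeRim p f 0 = 0 := by
    have hne : {M | removeRim p f M = 0}.Nonempty := ⟨N, by simp [removeRim, hN]⟩
    simp only [len] at h1mem
    rcases Nat.sInf_eq_zero.mp h1mem with h | h
    · exact h
    · exact absurd h (Set.nonempty_iff_ne_empty.mp hne)
  have hcount : f 0 ≤ ((pRimList p f).filter fun c => c.1 = 0).length := by
    simp only [removeRim] at hrem0
    omega
  have hsub : List.Sublist (pRimList p f) (rimList f) := pRimAux_sublist p _ _
  have hc1 : ((pRimList p f).filter fun c => c.1 = 0).length ≤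
      ((rimList f).filter fun c => c.1 = 0).length :=
    (List.Sublist.filter _ hsub).length_le
  have hf1 : f 1 ≤ 1 := by
    have h2 := count0_rim_le f t hr
    omega
  -- hook shape
  have hle1 : ∀ i, 1 ≤ i → f i ≤ 1 := fun i h1i => le_trans (hant h1i) hf1
  have hones : ∀ i, 1 ≤ i → i ≤ t → f i = 1 := by
    intro i hi1 hit
    have h1 := hlt i (by omega)
    have h2 := hle1 i hi1
    omega
  have hrim : rimList f = Lrow (f 0) ++ Lcol 1 t := rimList_hook f t hr hle1 hones
  -- first row is at most p
  have hmp : f 0 ≤ p := by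
    by_contra h
    push_neg at h
    have hb := count0_pRimAux_le p (f 0) t ((Lrow (f 0) ++ Lcol 1 t).length) hp1 h
    simp only [pRimList] at hcount
    rw [hrim] at hcount
    omega
  -- the p-rim is the whole rim
  have hPR : pRimList p f = Lrow (f 0) ++ Lcol 1 t := by
    simp only [pRimList]
    rw [hrim]
    exact hook_aux p (f 0) hf0 hmp _ t
      (by rw [List.length_append, length_Lrow, length_Lcol])
  -- compute a_0 and r_0
  have ha0 : aSeq p f 0 = f 0 + t := by
    simp only [aSeq, Function.iterate_zero, id_eq]
    rw [hPR, List.length_append, length_Lrow, length_Lcol]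
  have hr0 : rSeq p f 0 = t + 1 := by
    simp only [rSeq, Function.iterate_zero, id_eq]
    exact hr
  -- the fixed-column equation
  have hGS : GSymb p f = [(aSeq p f 0, rSeq p f 0)] := by
    simp only [GSymb, h1]
    simp [List.range_succ]
  rw [hGS] at hsym
  simp only [List.map_cons, List.map_nil, List.cons.injEq, and_true] at hsym
  have hfix : aSeq p f 0 + (if p ∣ aSeq p f 0 then 0 else 1) - rSeq p f 0 = rSeq p f 0 := by
    have := congrArg Prod.snd hsym
    simpa [mullCol] using this
  obtain ⟨j, hj⟩ := hodd
  have hndvd : ¬ p ∣ aSeq p f 0 := by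
    intro hdvd
    rw [if_pos hdvd] at hfix
    obtain ⟨k, hk⟩ := hdvd
    rw [ha0, hr0] at hfix
    rw [ha0] at hk
    rcases Nat.lt_or_ge k 2 with hk2 | hk2
    · interval_cases k <;> omega
    · have h2p : p * 2 ≤ p * k := Nat.mul_le_mul le_rfl hk2
      have hge : 2 * p ≤ f 0 + t := by rw [hk]; linarith
      omega
  rw [if_neg hndvd, ha0, hr0] at hfix
  have hm : f 0 = t + 1 := by omega
  refine ⟨hndvd, by rw [ha0, hr0]; omega, ?_⟩
  funext i
  rw [hr0]
  by_cases hi0 : i = 0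
  · subst hi0
    simpa using hm
  · rw [if_neg hi0]
    by_cases hir : i < t + 1
    · rw [if_pos hir]
      exact hones i (by omega) (by omega)
    · rw [if_neg hir]
      have h1i : len f ≤ i := by omega
      have := hant h1i
      omega

end Mull
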